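/- arXiv:2209.15123 — 9 statements merged into one kernel-verified Lean document; each statement's English description precedes it below -/
import Mathlib

section
/- The Shapley values satisfy efficiency: for any cooperative game ν on d players, the sum over all players i of φ_i(ν) equals ν([d]) − ν(∅), where φ_i(ν) = Σ_{S ⊆ [d]∖{i}} W(|S|,d)·(ν(S∪{i}) − ν(S)) and W(k,d) = k!(d−k−1)!/d!. -/
open Finset

/-- Shapley weight `W(k, n) = k! (n-k-1)! / n!`. -/
noncomputable def W (k n : ℕ) : ℝ :=
  (Nat.factorial k * Nat.factorial (n - k - 1) : ℝ) / (Nat.factorial n : ℝ)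

/-- Shapley value of player `i` in the game `ν` on `d` players. -/
noncomputable def shapley {d : ℕ} (ν : Finset (Fin d) → ℝ) (i : Fin d) : ℝ :=
  ∑ S ∈ (Finset.univ.erase i).powerset, W S.card d * (ν (insert i S) - ν S)

/-!
Collect the coefficient of each `ν T` in `∑ i, φ_i(ν)`. The set `T` occurs as `S ∪ {i}` for the
`|T|` choices of `i ∈ T`, with weight `W(|T| - 1, d)`, and as `S` for the `d - |T|` choices of
`i ∉ T`, with weight `W(|T|, d)`. Both products equal `|T|! (d - |T|)! / d!` when `∅ ≠ T ≠ [d]`,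
so only `ν [d]` (coefficient `1`) and `ν ∅` (coefficient `-1`) survive.
-/

section DoubleCounting

variable {α M : Type*} [Fintype α] [DecidableEq α] [AddCommMonoid M]

theorem sum_sum_powerset_erase (g : Finset α → M) :
    ∑ i, ∑ S ∈ (univ.erase i).powerset, g S = ∑ S, (Fintype.card α - #S) • g S := by
  rw [sum_comm' (t' := univ) (s' := fun S => Sᶜ) (fun i S => by simp [subset_erase])]
  simp_rw [sum_const, card_compl]

theorem sum_powerset_erase_insert (i : α) (g : Finset α → M) :
    ∑ S ∈ (univ.erase i).powerset, g (insert i S) = ∑ T with i ∈ T, g T :=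
  sum_nbij' (insert i) (·.erase i) (by simp) (by simp [subset_erase])
    (fun S hS => erase_insert (by simpa [subset_erase] using hS))
    (fun T hT => insert_erase (by simpa using hT)) (fun _ _ => rfl)

theorem sum_sum_powerset_erase_insert (g : ℕ → Finset α → M) :
    ∑ i, ∑ S ∈ (univ.erase i).powerset, g #S (insert i S) = ∑ T, #T • g (#T - 1) T := by
  have hreindex (i : α) :
      ∑ S ∈ (univ.erase i).powerset, g #S (insert i S) = ∑ T with i ∈ T, g (#T - 1) T := by
    rw [← sum_powerset_erase_insert i fun T => g (#T - 1) T]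
    refine sum_congr rfl fun S hS => ?_
    rw [card_insert_of_notMem (by simpa [subset_erase] using hS), Nat.add_sub_cancel]
  simp only [hreindex]
  rw [sum_comm' (t' := univ) (s' := id) (fun i T => by simp)]
  simp only [id, sum_const]

end DoubleCounting

open Nat in
theorem natCast_mul_W_pred {k d : ℕ} (hk : 1 ≤ k) (hkd : k ≤ d) :
    (k : ℝ) * W (k - 1) d = (k ! * (d - k)! : ℝ) / d ! := by
  rw [W, show d - (k - 1) - 1 = d - k by omega, ← mul_div_assoc, ← mul_assoc,
    ← Nat.cast_mul, Nat.mul_factorial_pred (by omega)]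

open Nat in
theorem natCast_sub_mul_W {k d : ℕ} (hkd : k < d) :
    ((d - k : ℕ) : ℝ) * W k d = (k ! * (d - k)! : ℝ) / d ! := by
  rw [W, ← mul_div_assoc, mul_left_comm, ← Nat.cast_mul, Nat.mul_factorial_pred (by omega),
    mul_comm]

theorem natCast_mul_W_pred_sub_natCast_sub_mul_W {k d : ℕ} (hkd : k ≤ d) :
    (k : ℝ) * W (k - 1) d - ((d - k : ℕ) : ℝ) * W k d
      = (if k = d then 1 else 0) - (if k = 0 then 1 else 0) := by
  rcases Nat.eq_zero_or_pos k with rfl | hk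
  · rcases Nat.eq_zero_or_pos d with rfl | hd
    · simp
    · rw [natCast_sub_mul_W hd]
      simp [hd.ne, Nat.factorial_ne_zero]
  rcases hkd.lt_or_eq with hkd | rfl
  · rw [natCast_mul_W_pred hk hkd.le, natCast_sub_mul_W hkd]
    simp [hkd.ne, hk.ne']
  · rw [natCast_mul_W_pred hk le_rfl]
    simp [hk.ne', Nat.factorial_ne_zero]

/-- Efficiency: the Shapley values sum to `ν([d]) - ν(∅)`. -/
theorem shapley_efficiency {d : ℕ} (ν : Finset (Fin d) → ℝ) :
    ∑ i : Fin d, shapley ν i = ν Finset.univ - ν ∅ := by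
  have hmarginal := sum_sum_powerset_erase_insert (fun k T => W k d * ν T)
  have hbase := sum_sum_powerset_erase (fun S => W #S d * ν S)
  simp only [Fintype.card_fin] at hmarginal hbase
  simp only [shapley, mul_sub, sum_sub_distrib]
  rw [hmarginal, hbase, ← sum_sub_distrib]
  have hcoef (T : Finset (Fin d)) :
      #T • (W (#T - 1) d * ν T) - (d - #T) • (W #T d * ν T)
        = (if T = univ then ν T else 0) - (if T = ∅ then ν T else 0) := by
    have hcard_eq : #T = d ↔ T = univ := by rw [← card_eq_iff_eq_univ, Fintype.card_fin]
    rw [nsmul_eq_mul, nsmul_eq_mul, ← mul_assoc, ← mul_assoc, ← sub_mul,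
      natCast_mul_W_pred_sub_natCast_sub_mul_W (card_le_univ T |>.trans_eq (Fintype.card_fin d))]
    simp only [hcard_eq, Finset.card_eq_zero]
    split_ifs <;> simp
  simp only [hcoef, sum_sub_distrib, sum_ite_eq', mem_univ, if_true]
end

section
/- Dummy Reduction: if D ⊆ [d] is a set of dummy players of ν and i ∉ D, then φ_i computed over the full player set [d] equals the Shapley value of i computed over the reduced player set [d]∖D, i.e., φ_i(ν) = Σ_{S ⊆ ([d]∖D)∖{i}} W(|S|, d−|D|)·(ν(S∪{i}) − ν(S)). -/
open Finset

lemma W_succ (k n : ℕ) (h : k + 2 ≤ n) : W k (n - 1) = W k n + W (k + 1) n := by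
  obtain ⟨a, rfl⟩ : ∃ a, n = k + 2 + a := ⟨n - (k + 2), by omega⟩
  simp only [W, show k + 2 + a - 1 = k + 1 + a from by omega,
    show k + 1 + a - k - 1 = a from by omega,
    show k + 2 + a - k - 1 = a + 1 from by omega,
    show k + 2 + a - (k + 1) - 1 = a from by omega]
  have h1 : (k + 2 + a).factorial = (k + 2 + a) * (k + 1 + a).factorial := by
    rw [show k + 2 + a = (k + 1 + a) + 1 from by ring, Nat.factorial_succ]
  have h2 : (a + 1).factorial = (a + 1) * a.factorial := Nat.factorial_succ a
  have h3 : (k + 1).factorial = (k + 1) * k.factorial := Nat.factorial_succ k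
  rw [h1, h2, h3]
  have p1 : ((k + 1 + a).factorial : ℝ) ≠ 0 := by positivity
  have p2 : ((k + 2 + a : ℕ) : ℝ) ≠ 0 := by positivity
  push_cast
  field_simp
  ring

lemma key {d : ℕ} (ν : Finset (Fin d) → ℝ) (i j : Fin d) (D : Finset (Fin d))
    (hj : ∀ S : Finset (Fin d), j ∉ S → ν (insert j S) = ν S)
    (hij : i ≠ j) (hjD : j ∉ D) (hiD : i ∉ D) :
    ∑ S ∈ ((Finset.univ \ insert j D).erase i).powerset,
        W S.card (d - (insert j D).card) * (ν (insert i S) - ν S)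
    = ∑ S ∈ ((Finset.univ \ D).erase i).powerset,
        W S.card (d - D.card) * (ν (insert i S) - ν S) := by
  set B := (Finset.univ \ insert j D).erase i with hB
  have hjB : j ∉ B := by simp [hB]
  have hA : (Finset.univ \ D).erase i = insert j B := by
    ext k
    simp only [hB, mem_erase, mem_sdiff, mem_univ, true_and, mem_insert]
    constructor
    · rintro ⟨hk, hkD⟩
      by_cases hkj : k = j
      · left; exact hkj
      · right; exact ⟨hk, by simp [hkj, hkD]⟩
    · rintro (rfl | ⟨hk, hkD⟩)
      · exact ⟨Ne.symm hij, hjD⟩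
      · exact ⟨hk, fun h => hkD (Or.inr h)⟩
  have hcard2 : D.card + 2 ≤ d := by
    have : (insert i (insert j D)).card ≤ d := by
      simpa using Finset.card_le_card (Finset.subset_univ (insert i (insert j D)))
    rwa [Finset.card_insert_of_notMem (by simp [hiD, hij]),
      Finset.card_insert_of_notMem hjD] at this
  have hBcard : B.card = d - D.card - 2 := by
    rw [hB, Finset.card_erase_of_mem (by simp [hij, hiD]),
      Finset.card_sdiff_of_subset (Finset.subset_univ _),
      Finset.card_insert_of_notMem hjD, Finset.card_univ, Fintype.card_fin]
    omega
  rw [hA, Finset.sum_powerset_insert hjB, ← Finset.sum_add_distrib]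
  apply Finset.sum_congr rfl
  intro S hS
  have hSB : S ⊆ B := Finset.mem_powerset.mp hS
  have hjS : j ∉ S := fun h => hjB (hSB h)
  have hSc : S.card ≤ B.card := Finset.card_le_card hSB
  have hj1 : ν (insert j S) = ν S := hj S hjS
  have hj2 : ν (insert i (insert j S)) = ν (insert i S) := by
    rw [Finset.insert_comm]
    exact hj (insert i S) (by simp [hjS, Ne.symm hij])
  rw [hj1, hj2, Finset.card_insert_of_notMem hjS,
    Finset.card_insert_of_notMem hjD,
    show d - (D.card + 1) = (d - D.card) - 1 from by omega,
    W_succ S.card (d - D.card) (by omega)]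
  ring

/-- Dummy Reduction: Shapley values of non-dummy players can be computed over
the reduced player set obtained by removing the set D of dummy players. -/
theorem shapley_dummy_reduction {d : ℕ} (ν : Finset (Fin d) → ℝ) (D : Finset (Fin d))
    (hD : ∀ j ∈ D, ∀ S : Finset (Fin d), j ∉ S → ν (insert j S) = ν S)
    (i : Fin d) (hi : i ∉ D) :
    shapley ν i =
      ∑ S ∈ ((Finset.univ \ D).erase i).powerset,
        W S.card (d - D.card) * (ν (insert i S) - ν S) := by
  symm
  induction D using Finset.induction_on with
  | empty => simp [shapley]
  | @insert j D' hjD' ih =>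
    rw [key ν i j D' (hD j (mem_insert_self j D')) (fun h => hi (h ▸ mem_insert_self j D'))
      hjD' (fun h => hi (mem_insert_of_mem h))]
    exact ih (fun a ha S => hD a (mem_insert_of_mem ha) S) (fun h => hi (mem_insert_of_mem h))
end

section
/- If a path P contains no type-B edge, then for every S ⊆ [d], h_P(r_S^z(x)) = v · Π_{e type X} 1(i_e ∈ S) · Π_{e type Z} 1(i_e ∉ S), where type X means R_e(x)=1, R_e(z)=0 and type Z means R_e(x)=0, R_e(z)=1. -/
open Finset

/-- The replace function: coordinates in S come from x, others from the baseline z. -/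
def replace {d : ℕ} (x z : Fin d → ℝ) (S : Finset (Fin d)) : Fin d → ℝ :=
  fun i => if i ∈ S then x i else z i

/-- `R` is a Boolean threshold function on coordinate `i`:
either `w ↦ 1(w i ≤ γ)` or `w ↦ 1(w i > γ)`. -/
def IsThreshold {d : ℕ} (i : Fin d) (R : (Fin d → ℝ) → ℝ) : Prop :=
  ∃ γ : ℝ, (∀ w, R w = if w i ≤ γ then 1 else 0) ∨ (∀ w, R w = if γ < w i then 1 else 0)

/-- The decision stump associated with a maximal path: leaf value times the
product of the Boolean edge functions. -/
def stump {d : ℕ} {E : Type*} [Fintype E] (v : ℝ) (R : E → (Fin d → ℝ) → ℝ)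
    (w : Fin d → ℝ) : ℝ :=
  v * ∏ e : E, R e w

/-- With no type-B edge, the stump evaluated at replaced inputs reduces to a
product of membership indicators over type-X and type-Z edges. -/
theorem stump_replace_indicator {d : ℕ} {E : Type*} [Fintype E] (v : ℝ)
    (idx : E → Fin d) (R : E → (Fin d → ℝ) → ℝ)
    (hR : ∀ e, IsThreshold (idx e) (R e)) (x z : Fin d → ℝ)
    (hnoB : ∀ e, ¬ (R e x = 0 ∧ R e z = 0)) :
    ∀ S : Finset (Fin d),
      stump v R (replace x z S) =
        v * (∏ e ∈ Finset.univ.filter (fun e => R e x = 1 ∧ R e z = 0),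
              (if idx e ∈ S then (1 : ℝ) else 0)) *
            (∏ e ∈ Finset.univ.filter (fun e => R e x = 0 ∧ R e z = 1),
              (if idx e ∉ S then (1 : ℝ) else 0)) := by
  classical
  intro S
  have h01 : ∀ e (w : Fin d → ℝ), R e w = 0 ∨ R e w = 1 := by
    intro e w
    obtain ⟨γ, h | h⟩ := hR e <;> rw [h] <;> split <;> simp
  have hrep : ∀ e, R e (replace x z S) = if idx e ∈ S then R e x else R e z := by
    intro e
    obtain ⟨γ, h | h⟩ := hR e <;>
      simp only [h, replace] <;> by_cases hm : idx e ∈ S <;> simp [hm]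
  have key : ∀ e : E, R e (replace x z S) =
      (if R e x = 1 ∧ R e z = 0 then (if idx e ∈ S then (1:ℝ) else 0) else 1) *
      (if R e x = 0 ∧ R e z = 1 then (if idx e ∉ S then (1:ℝ) else 0) else 1) := by
    intro e
    rw [hrep e]
    rcases h01 e x with hx | hx <;> rcases h01 e z with hz | hz
    · exact absurd ⟨hx, hz⟩ (hnoB e)
    · by_cases hm : idx e ∈ S <;> simp [hx, hz, hm]
    · by_cases hm : idx e ∈ S <;> simp [hx, hz, hm]
    · by_cases hm : idx e ∈ S <;> simp [hx, hz, hm]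
  unfold stump
  rw [mul_assoc]
  congr 1
  calc ∏ e : E, R e (replace x z S)
      = ∏ e : E, ((if R e x = 1 ∧ R e z = 0 then (if idx e ∈ S then (1:ℝ) else 0) else 1) *
          (if R e x = 0 ∧ R e z = 1 then (if idx e ∉ S then (1:ℝ) else 0) else 1)) := by
        exact Finset.prod_congr rfl (fun e _ => key e)
    _ = _ := by
        rw [Finset.prod_mul_distrib, ← Finset.prod_filter, ← Finset.prod_filter]
end

section
/- If S_X ∩ S_Z ≠ ∅, where S_X (resp. S_Z) is the set of feature indices of type-X (resp. type-Z) edges of P, then h_P(r_S^z(x)) = 0 for all S ⊆ [d], and hence all Shapley values of the corresponding interventional game vanish. -/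
open Finset

/-- Feature indices of type-X edges: `R e x = 1` and `R e z = 0`. -/
noncomputable def SX {d : ℕ} {E : Type*} [Fintype E] (idx : E → Fin d)
    (R : E → (Fin d → ℝ) → ℝ) (x z : Fin d → ℝ) : Finset (Fin d) :=
  (Finset.univ.filter (fun e => R e x = 1 ∧ R e z = 0)).image idx

/-- Feature indices of type-Z edges: `R e x = 0` and `R e z = 1`. -/
noncomputable def SZ {d : ℕ} {E : Type*} [Fintype E] (idx : E → Fin d)
    (R : E → (Fin d → ℝ) → ℝ) (x z : Fin d → ℝ) : Finset (Fin d) :=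
  (Finset.univ.filter (fun e => R e x = 0 ∧ R e z = 1)).image idx

/-- If S_X and S_Z intersect, the stump game is identically zero and all
its Shapley values vanish. -/
theorem SX_inter_SZ_zero {d : ℕ} {E : Type*} [Fintype E] (v : ℝ)
    (idx : E → Fin d) (R : E → (Fin d → ℝ) → ℝ)
    (hR : ∀ e, IsThreshold (idx e) (R e)) (x z : Fin d → ℝ)
    (hinter : (SX idx R x z ∩ SZ idx R x z).Nonempty) :
    (∀ S : Finset (Fin d), stump v R (replace x z S) = 0) ∧
    (∀ i : Fin d, shapley (fun S => stump v R (replace x z S)) i = 0) := by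
  have key : ∀ S : Finset (Fin d), stump v R (replace x z S) = 0 := by
    obtain ⟨i, hi⟩ := hinter
    rw [Finset.mem_inter] at hi
    obtain ⟨hiX, hiZ⟩ := hi
    simp only [SX, SZ, Finset.mem_image, Finset.mem_filter] at hiX hiZ
    obtain ⟨e, ⟨_, hex, hez⟩, hei⟩ := hiX
    obtain ⟨f, ⟨_, hfx, hfz⟩, hfi⟩ := hiZ
    have dep : ∀ g : E, ∀ w₁ w₂ : Fin d → ℝ, w₁ (idx g) = w₂ (idx g) →
        R g w₁ = R g w₂ := by
      intro g w₁ w₂ hw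
      obtain ⟨γ, hγ | hγ⟩ := hR g <;> rw [hγ, hγ, hw]
    intro S
    unfold stump
    by_cases hiS : i ∈ S
    · have : R f (replace x z S) = 0 := by
        rw [dep f _ x (by simp [replace, hfi, hiS]), hfx]
      rw [Finset.prod_eq_zero (Finset.mem_univ f) this, mul_zero]
    · have : R e (replace x z S) = 0 := by
        rw [dep e _ z (by simp [replace, hei, hiS]), hez]
      rw [Finset.prod_eq_zero (Finset.mem_univ e) this, mul_zero]
  refine ⟨key, fun i => ?_⟩
  unfold shapley
  simp [key]
end

section
/- Dummy features for a path game: if feature i ∉ S_X ∪ S_Z, then i is a dummy player of the game S ↦ h_P(r_S^z(x)), i.e., h_P(r_{S∪{i}}^z(x)) = h_P(r_S^z(x)) for all S ⊆ [d]∖{i}. -/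
open Finset

/-- A feature outside S_X ∪ S_Z is a dummy player of the stump game. -/
theorem not_in_SXZ_dummy {d : ℕ} {E : Type*} [Fintype E] (v : ℝ)
    (idx : E → Fin d) (R : E → (Fin d → ℝ) → ℝ)
    (hR : ∀ e, IsThreshold (idx e) (R e)) (x z : Fin d → ℝ)
    (i : Fin d) (hi : i ∉ SX idx R x z ∪ SZ idx R x z) :
    ∀ S : Finset (Fin d), i ∉ S →
      stump v R (replace x z (insert i S)) = stump v R (replace x z S) := by
  intro S hiS
  unfold stump
  congr 1
  apply Finset.prod_congr rfl
  intro e _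
  simp only [Finset.mem_union, SX, SZ, Finset.mem_image, Finset.mem_filter,
    Finset.mem_univ, true_and, not_or, not_exists, not_and] at hi
  have h1 := hi.1 e
  have h2 := hi.2 e
  obtain ⟨γ, h | h⟩ := hR e
  · by_cases hie : idx e = i
    · have key : x (idx e) ≤ γ ↔ z (idx e) ≤ γ := by
        constructor
        · intro hx1
          by_contra hz1
          exact h1 ⟨by rw [h x, if_pos hx1], by rw [h z, if_neg hz1]⟩ hie
        · intro hz1
          by_contra hx1
          exact h2 ⟨by rw [h x, if_neg hx1], by rw [h z, if_pos hz1]⟩ hie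
      rw [h, h]
      have e1 : replace x z (insert i S) (idx e) = x (idx e) := by
        simp [replace, hie]
      have e2 : replace x z S (idx e) = z (idx e) := by
        simp [replace, hie, hiS]
      rw [e1, e2]
      by_cases hx1 : x (idx e) ≤ γ
      · rw [if_pos hx1, if_pos (key.mp hx1)]
      · rw [if_neg hx1, if_neg (fun hz1 => hx1 (key.mpr hz1))]
    · rw [h, h]
      have : replace x z (insert i S) (idx e) = replace x z S (idx e) := by
        simp [replace, Finset.mem_insert, hie]
      rw [this]
  · by_cases hie : idx e = i
    · have key : γ < x (idx e) ↔ γ < z (idx e) := by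
        constructor
        · intro hx1
          by_contra hz1
          exact h1 ⟨by rw [h x, if_pos hx1], by rw [h z, if_neg hz1]⟩ hie
        · intro hz1
          by_contra hx1
          exact h2 ⟨by rw [h x, if_neg hx1], by rw [h z, if_pos hz1]⟩ hie
      rw [h, h]
      have e1 : replace x z (insert i S) (idx e) = x (idx e) := by
        simp [replace, hie]
      have e2 : replace x z S (idx e) = z (idx e) := by
        simp [replace, hie, hiS]
      rw [e1, e2]
      by_cases hx1 : γ < x (idx e)
      · rw [if_pos hx1, if_pos (key.mp hx1)]
      · rw [if_neg hx1, if_neg (fun hz1 => hx1 (key.mpr hz1))]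
    · rw [h, h]
      have : replace x z (insert i S) (idx e) = replace x z S (idx e) := by
        simp [replace, Finset.mem_insert, hie]
      rw [this]
end

section
/- Flow Blocking: if P contains no type-B edge and S_X ∩ S_Z = ∅, then for every S ⊆ S_X ∪ S_Z, h_P(r_S^z(x)) equals v if S = S_X and 0 otherwise. -/
open Finset

lemma thresh_replace {d : ℕ} {i : Fin d} {R : (Fin d → ℝ) → ℝ}
    (h : IsThreshold i R) (x z : Fin d → ℝ) (S : Finset (Fin d)) :
    R (replace x z S) = if i ∈ S then R x else R z := by
  obtain ⟨γ, h | h⟩ := h <;>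
  · simp only [h, replace]
    by_cases hi : i ∈ S <;> simp [hi]

lemma thresh_zero_or_one {d : ℕ} {i : Fin d} {R : (Fin d → ℝ) → ℝ}
    (h : IsThreshold i R) (w : Fin d → ℝ) : R w = 0 ∨ R w = 1 := by
  obtain ⟨γ, h | h⟩ := h <;>
  · rw [h w]; split_ifs <;> simp

/-- Flow Blocking: with no type-B edge and disjoint S_X, S_Z, the stump game on
coalitions S ⊆ S_X ∪ S_Z is v at S = S_X and 0 elsewhere. -/
theorem flow_blocking {d : ℕ} {E : Type*} [Fintype E] (v : ℝ)
    (idx : E → Fin d) (R : E → (Fin d → ℝ) → ℝ)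
    (hR : ∀ e, IsThreshold (idx e) (R e)) (x z : Fin d → ℝ)
    (hnoB : ∀ e, ¬ (R e x = 0 ∧ R e z = 0))
    (hdisj : Disjoint (SX idx R x z) (SZ idx R x z)) :
    ∀ S ⊆ SX idx R x z ∪ SZ idx R x z,
      stump v R (replace x z S) = if S = SX idx R x z then v else 0 := by
  intro S hS
  have hval : ∀ e, R e (replace x z S) = if idx e ∈ S then R e x else R e z :=
    fun e => thresh_replace (hR e) x z S
  by_cases hSX : S = SX idx R x z
  · subst hSX
    rw [if_pos rfl, stump]
    have hone : ∀ e, R e (replace x z (SX idx R x z)) = 1 := by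
      intro e
      rw [hval e]
      have hex := thresh_zero_or_one (hR e) x
      have hez := thresh_zero_or_one (hR e) z
      by_cases hx : R e x = 1
      · by_cases hz : R e z = 1
        · split_ifs <;> assumption
        · have hmem : idx e ∈ SX idx R x z :=
            Finset.mem_image.mpr ⟨e, Finset.mem_filter.mpr
              ⟨Finset.mem_univ e, hx, hez.resolve_right hz⟩, rfl⟩
          rw [if_pos hmem]; exact hx
      · have hx0 := hex.resolve_right hx
        have hz1 : R e z = 1 := hez.resolve_left (fun h0 => hnoB e ⟨hx0, h0⟩)
        have hmemZ : idx e ∈ SZ idx R x z :=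
          Finset.mem_image.mpr ⟨e, Finset.mem_filter.mpr
            ⟨Finset.mem_univ e, hx0, hz1⟩, rfl⟩
        have hnot : idx e ∉ SX idx R x z :=
          Finset.disjoint_right.mp hdisj hmemZ
        rw [if_neg hnot]; exact hz1
    simp [hone]
  · rw [if_neg hSX, stump]
    have hzero : ∃ e, R e (replace x z S) = 0 := by
      by_cases hsub : SX idx R x z ⊆ S
      · have hns : ¬ S ⊆ SX idx R x z := fun h => hSX (Finset.Subset.antisymm h hsub)
        obtain ⟨i, hiS, hiSX⟩ := Finset.not_subset.mp hns
        have hiSZ : i ∈ SZ idx R x z := (Finset.mem_union.mp (hS hiS)).resolve_left hiSX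
        obtain ⟨e, he, hie⟩ := Finset.mem_image.mp hiSZ
        refine ⟨e, ?_⟩
        rw [hval e, if_pos (hie ▸ hiS)]
        exact (Finset.mem_filter.mp he).2.1
      · obtain ⟨i, hiSX, hiS⟩ := Finset.not_subset.mp hsub
        obtain ⟨e, he, hie⟩ := Finset.mem_image.mp hiSX
        refine ⟨e, ?_⟩
        rw [hval e, if_neg (hie ▸ hiS)]
        exact (Finset.mem_filter.mp he).2.2
    obtain ⟨e, he⟩ := hzero
    rw [Finset.prod_eq_zero (Finset.mem_univ e) he, mul_zero]
end

section
/- Complexity Reduction for TreeSHAP: if P contains no type-B edge and S_X ∩ S_Z = ∅, then the Shapley values of the game ν(S) = h_P(r_S^z(x)) are: φ_i = 0 if i ∉ S_X∪S_Z; φ_i = W(|S_X|−1, |S_X∪S_Z|)·v if i ∈ S_X; φ_i = −W(|S_X|, |S_X∪S_Z|)·v if i ∈ S_Z, where W(k,n) = k!(n−k−1)!/n!. -/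
open Finset

lemma W_pascal {k m : ℕ} (hk : k < m) : W k (m+1) + W (k+1) (m+1) = W k m := by
  obtain ⟨j, rfl⟩ : ∃ j, m = k + 1 + j := ⟨m - (k+1), by omega⟩
  unfold W
  have h1 : k + 1 + j - k - 1 = j := by omega
  have h2 : k + 1 + j + 1 - k - 1 = j + 1 := by omega
  have h3 : k + 1 + j + 1 - (k+1) - 1 = j := by omega
  rw [h1, h2, h3]
  rw [show k+1+j+1 = (k+1+j)+1 from rfl, Nat.factorial_succ (k+1+j), Nat.factorial_succ j, Nat.factorial_succ k]
  have hne : ((k+1+j).factorial : ℝ) ≠ 0 := Nat.cast_ne_zero.mpr (Nat.factorial_ne_zero _)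
  have hne2 : ((k+1+j+1 : ℕ) : ℝ) ≠ 0 := by positivity
  push_cast
  field_simp
  ring

lemma sum_W (a n : ℕ) (ha : a < n) : ∀ N,
    ∑ j ∈ Finset.range (N+1), (Nat.choose N j : ℝ) * W (a+j) (n+N) = W a n := by
  intro N
  induction N with
  | zero => simp
  | succ N ih =>
    show ∑ j ∈ range (N+2), ((N+1).choose j : ℝ) * W (a+j) (n+N+1) = W a n
    rw [Finset.sum_range_succ']
    have h1 : ∀ i ∈ range (N+1), ((N+1).choose (i+1) : ℝ) * W (a+(i+1)) (n+N+1)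
        = (N.choose i : ℝ) * W (a+(i+1)) (n+N+1) + (N.choose (i+1) : ℝ) * W (a+(i+1)) (n+N+1) := by
      intro i _; rw [Nat.choose_succ_succ]; push_cast; ring
    rw [Finset.sum_congr rfl h1, Finset.sum_add_distrib, add_assoc]
    have h2 : ∑ i ∈ range (N+1), (N.choose (i+1) : ℝ) * W (a+(i+1)) (n+N+1)
        + ((N+1).choose 0 : ℝ) * W (a+0) (n+N+1)
        = ∑ j ∈ range (N+1), (N.choose j : ℝ) * W (a+j) (n+N+1) := by
      have h3 := Finset.sum_range_succ' (fun j => (N.choose j : ℝ) * W (a+j) (n+N+1)) (N+1)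
      rw [Finset.sum_range_succ] at h3
      simp only [Nat.choose_succ_self, Nat.cast_zero, zero_mul, add_zero,
        Nat.choose_zero_right, Nat.cast_one] at h3 ⊢
      rw [← h3]
    rw [h2, ← Finset.sum_add_distrib, ← ih]
    apply Finset.sum_congr rfl
    intro i hi
    rw [← mul_add, add_comm (W (a+(i+1)) (n+N+1))]
    congr 1
    exact W_pascal (by simp only [Finset.mem_range] at hi; omega)

lemma key_count {d : ℕ} (C D : Finset (Fin d)) (hCD : Disjoint C D) (hD : D.Nonempty) :
    ∑ S ∈ Finset.univ.powerset.filter (fun S => C ⊆ S ∧ Disjoint D S), W S.card d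
      = W C.card (C ∪ D).card := by
  classical
  set F : Finset (Fin d) := Finset.univ \ (C ∪ D) with hF
  have hstep : ∑ S ∈ Finset.univ.powerset.filter (fun S => C ⊆ S ∧ Disjoint D S), W S.card d
      = ∑ T ∈ F.powerset, W (C.card + T.card) d := by
    apply Finset.sum_nbij' (fun S => S \ C) (fun T => C ∪ T)
    · intro S hS
      simp only [Finset.mem_filter, Finset.mem_powerset] at hS ⊢
      intro a ha
      simp only [Finset.mem_sdiff] at ha ⊢
      simp only [hF, Finset.mem_sdiff, Finset.mem_univ, Finset.mem_union, true_and]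
      push_neg
      exact ⟨ha.2, fun hD' => (Finset.disjoint_right.mp hS.2.2) ha.1 hD'⟩
    · intro T hT
      simp only [Finset.mem_powerset] at hT
      simp only [Finset.mem_filter, Finset.mem_powerset]
      refine ⟨Finset.subset_univ _, Finset.subset_union_left, ?_⟩
      rw [Finset.disjoint_union_right]
      constructor
      · exact hCD.symm
      · refine Finset.disjoint_left.mpr fun a haD haT => ?_
        have := hT haT
        simp [hF] at this
        exact this.2 haD
    · intro S hS
      simp only [Finset.mem_filter, Finset.mem_powerset] at hS
      exact Finset.union_sdiff_of_subset hS.2.1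
    · intro T hT
      simp only [Finset.mem_powerset] at hT
      apply Finset.union_sdiff_cancel_left
      refine Finset.disjoint_left.mpr fun a haC haT => ?_
      have := hT haT
      simp [hF] at this
      exact this.1 haC
    · intro S hS
      simp only [Finset.mem_filter, Finset.mem_powerset] at hS
      congr 1
      have hcc := Finset.card_le_card hS.2.1
      rw [Finset.card_sdiff_of_subset hS.2.1]
      omega
  rw [hstep]
  have hcard : ∀ T ∈ F.powerset, W (C.card + T.card) d = (fun m => W (C.card + m) d) T.card :=
    fun _ _ => rfl
  rw [Finset.sum_congr rfl hcard, Finset.sum_powerset_apply_card (fun m => W (C.card + m) d)]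
  have hFcard : F.card = d - (C ∪ D).card := by
    rw [hF, Finset.card_sdiff_of_subset (Finset.subset_univ _)]
    simp
  have hle : (C ∪ D).card ≤ d := by
    simpa using Finset.card_le_card (Finset.subset_univ (C ∪ D))
  have hlt : C.card < (C ∪ D).card := by
    rw [Finset.card_union_of_disjoint hCD]
    have := Finset.card_pos.mpr hD
    omega
  have hd : d = (C ∪ D).card + F.card := by omega
  have := sum_W C.card (C ∪ D).card hlt F.card
  rw [← this]
  apply Finset.sum_congr rfl
  intro j hj
  rw [nsmul_eq_mul, ← hd]

/-- Complexity Reduction for Interventional TreeSHAP. -/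
theorem treeshap_complexity_reduction {d : ℕ} {E : Type*} [Fintype E] (v : ℝ)
    (idx : E → Fin d) (R : E → (Fin d → ℝ) → ℝ)
    (hR : ∀ e, IsThreshold (idx e) (R e)) (x z : Fin d → ℝ)
    (hnoB : ∀ e, ¬ (R e x = 0 ∧ R e z = 0))
    (hdisj : Disjoint (SX idx R x z) (SZ idx R x z)) :
    ∀ i : Fin d,
      (i ∉ SX idx R x z ∪ SZ idx R x z →
        shapley (fun S => stump v R (replace x z S)) i = 0) ∧
      (i ∈ SX idx R x z →
        shapley (fun S => stump v R (replace x z S)) i =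
          W ((SX idx R x z).card - 1) ((SX idx R x z ∪ SZ idx R x z).card) * v) ∧
      (i ∈ SZ idx R x z →
        shapley (fun S => stump v R (replace x z S)) i =
          - W ((SX idx R x z).card) ((SX idx R x z ∪ SZ idx R x z).card) * v) := by
  classical
  set A := SX idx R x z with hA
  set B := SZ idx R x z with hB
  -- values of R are 0 or 1
  have hvals : ∀ e (w : Fin d → ℝ), R e w = 0 ∨ R e w = 1 := by
    intro e w
    obtain ⟨γ, h | h⟩ := hR e <;> rw [h] <;> split_ifs <;> simp
  -- R e on replace
  have hrep : ∀ e S, R e (replace x z S) = if idx e ∈ S then R e x else R e z := by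
    intro e S
    obtain ⟨γ, h | h⟩ := hR e <;>
      by_cases hiS : idx e ∈ S <;> simp [h, replace, hiS]
  -- value of the game
  have hval : ∀ S : Finset (Fin d),
      stump v R (replace x z S) = if A ⊆ S ∧ Disjoint B S then v else 0 := by
    intro S
    unfold stump
    by_cases hc : A ⊆ S ∧ Disjoint B S
    · rw [if_pos hc]
      have hone : ∏ e : E, R e (replace x z S) = 1 := by
        apply Finset.prod_eq_one
        intro e _
        rw [hrep e S]
        by_cases hiS : idx e ∈ S
        · rw [if_pos hiS]
          rcases hvals e x with h0 | h1
          · rcases hvals e z with hz0 | hz1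
            · exact absurd ⟨h0, hz0⟩ (hnoB e)
            · exfalso
              have hmem : idx e ∈ B := by
                rw [hB, SZ]
                exact Finset.mem_image.mpr ⟨e, Finset.mem_filter.mpr ⟨Finset.mem_univ _, h0, hz1⟩, rfl⟩
              exact (Finset.disjoint_left.mp hc.2 hmem) hiS
          · exact h1
        · rw [if_neg hiS]
          rcases hvals e z with hz0 | hz1
          · exfalso
            have hx1 : R e x = 1 := by
              rcases hvals e x with h0 | h1
              · exact absurd ⟨h0, hz0⟩ (hnoB e)
              · exact h1
            have hmem : idx e ∈ A := by
              rw [hA, SX]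
              exact Finset.mem_image.mpr ⟨e, Finset.mem_filter.mpr ⟨Finset.mem_univ _, hx1, hz0⟩, rfl⟩
            exact hiS (hc.1 hmem)
          · exact hz1
      rw [hone, mul_one]
    · rw [if_neg hc]
      rcases not_and_or.mp hc with hns | hnd
      · obtain ⟨i₀, hi₀A, hi₀S⟩ := Finset.not_subset.mp hns
        rw [hA, SX] at hi₀A
        obtain ⟨e, he, hei⟩ := Finset.mem_image.mp hi₀A
        rw [Finset.mem_filter] at he
        have : R e (replace x z S) = 0 := by
          rw [hrep e S, hei, if_neg hi₀S]
          exact he.2.2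
        rw [Finset.prod_eq_zero (Finset.mem_univ e) this, mul_zero]
      · obtain ⟨i₀, hi₀B, hi₀S⟩ := Finset.not_disjoint_iff.mp hnd
        rw [hB, SZ] at hi₀B
        obtain ⟨e, he, hei⟩ := Finset.mem_image.mp hi₀B
        rw [Finset.mem_filter] at he
        have : R e (replace x z S) = 0 := by
          rw [hrep e S, hei, if_pos hi₀S]
          exact he.2.1
        rw [Finset.prod_eq_zero (Finset.mem_univ e) this, mul_zero]
  intro i
  refine ⟨?_, ?_, ?_⟩
  · -- i ∉ A ∪ B
    intro hi
    rw [Finset.mem_union] at hi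
    push_neg at hi
    obtain ⟨hiA, hiB⟩ := hi
    unfold shapley
    apply Finset.sum_eq_zero
    intro S _
    have : stump v R (replace x z (insert i S)) = stump v R (replace x z S) := by
      rw [hval, hval]
      congr 1
      have h1 : A ⊆ insert i S ↔ A ⊆ S := by
        constructor
        · intro h a ha
          rcases Finset.mem_insert.mp (h ha) with rfl | h'
          · exact absurd ha hiA
          · exact h'
        · intro h; exact h.trans (Finset.subset_insert _ _)
      have h2 : Disjoint B (insert i S) ↔ Disjoint B S := by
        rw [Finset.disjoint_insert_right]
        simp [hiB]
      simp only [h1, h2]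
    simp only [this, sub_self, mul_zero]
  · -- i ∈ A
    intro hiA
    have hiB : i ∉ B := Finset.disjoint_left.mp hdisj hiA
    unfold shapley
    have hterm : ∀ S ∈ (Finset.univ.erase i).powerset,
        W S.card d * (stump v R (replace x z (insert i S)) - stump v R (replace x z S))
        = if A.erase i ⊆ S ∧ Disjoint (insert i B) S then W S.card d * v else 0 := by
      intro S hS
      have hiS : i ∉ S := by
        rw [Finset.mem_powerset] at hS
        exact fun h => (Finset.mem_erase.mp (hS h)).1 rfl
      have hνS : stump v R (replace x z S) = 0 := by
        rw [hval, if_neg]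
        rintro ⟨h1, _⟩
        exact hiS (h1 hiA)
      have hν : stump v R (replace x z (insert i S))
          = if A.erase i ⊆ S ∧ Disjoint (insert i B) S then v else 0 := by
        rw [hval]
        congr 1
        have h1 : A ⊆ insert i S ↔ A.erase i ⊆ S := by
          rw [Finset.subset_insert_iff]
        have h2 : Disjoint B (insert i S) ↔ Disjoint (insert i B) S := by
          rw [Finset.disjoint_insert_right, Finset.disjoint_insert_left]
          tauto
        simp only [h1, h2]
      rw [hνS, hν, sub_zero, mul_ite, mul_zero]
    rw [Finset.sum_congr rfl hterm, Finset.sum_ite, Finset.sum_const_zero, add_zero]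
    have hfilter : (Finset.univ.erase i).powerset.filter
          (fun S => A.erase i ⊆ S ∧ Disjoint (insert i B) S)
        = Finset.univ.powerset.filter (fun S => A.erase i ⊆ S ∧ Disjoint (insert i B) S) := by
      ext S
      simp only [Finset.mem_filter, Finset.mem_powerset]
      constructor
      · rintro ⟨h1, h2⟩
        exact ⟨Finset.subset_univ _, h2⟩
      · rintro ⟨_, h2, h3⟩
        refine ⟨?_, h2, h3⟩
        intro a ha
        rw [Finset.mem_erase]
        refine ⟨?_, Finset.mem_univ _⟩
        rintro rfl
        exact (Finset.disjoint_left.mp h3 (Finset.mem_insert_self _ _)) ha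
    rw [hfilter, ← Finset.sum_mul]
    have hCD : Disjoint (A.erase i) (insert i B) := by
      rw [Finset.disjoint_insert_right]
      exact ⟨Finset.notMem_erase _ _, Finset.disjoint_of_subset_left (Finset.erase_subset _ _) hdisj⟩
    rw [key_count (A.erase i) (insert i B) hCD (Finset.insert_nonempty _ _)]
    have hunion : A.erase i ∪ insert i B = A ∪ B := by
      rw [Finset.union_insert, ← Finset.insert_union, Finset.insert_erase hiA]
    rw [hunion, Finset.card_erase_of_mem hiA]
  · -- i ∈ B
    intro hiB
    have hiA : i ∉ A := Finset.disjoint_right.mp hdisj hiB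
    unfold shapley
    have hterm : ∀ S ∈ (Finset.univ.erase i).powerset,
        W S.card d * (stump v R (replace x z (insert i S)) - stump v R (replace x z S))
        = -(if A ⊆ S ∧ Disjoint B S then W S.card d * v else 0) := by
      intro S hS
      have hν1 : stump v R (replace x z (insert i S)) = 0 := by
        rw [hval, if_neg]
        rintro ⟨_, h2⟩
        exact (Finset.disjoint_left.mp h2 hiB) (Finset.mem_insert_self _ _)
      rw [hν1, hval, zero_sub, mul_neg, mul_ite, mul_zero]
    rw [Finset.sum_congr rfl hterm, Finset.sum_neg_distrib]
    rw [Finset.sum_ite, Finset.sum_const_zero, add_zero]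
    have hfilter : (Finset.univ.erase i).powerset.filter (fun S => A ⊆ S ∧ Disjoint B S)
        = Finset.univ.powerset.filter (fun S => A ⊆ S ∧ Disjoint B S) := by
      ext S
      simp only [Finset.mem_filter, Finset.mem_powerset]
      constructor
      · rintro ⟨h1, h2⟩
        exact ⟨Finset.subset_univ _, h2⟩
      · rintro ⟨_, h2, h3⟩
        refine ⟨?_, h2, h3⟩
        intro a ha
        rw [Finset.mem_erase]
        refine ⟨?_, Finset.mem_univ _⟩
        rintro rfl
        exact (Finset.disjoint_left.mp h3 hiB) ha
    rw [hfilter, ← Finset.sum_mul, key_count A B hdisj ⟨i, hiB⟩, neg_mul]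
end

section
/- Shapley-Taylor dummy property: if player i or player j is a dummy of ν, then Φ_{ij}(ν) = 0. -/
open Finset

/-- Shapley-Taylor index of the pair (i, j) for the game ν on d players. -/
noncomputable def shapleyTaylor {d : ℕ} (ν : Finset (Fin d) → ℝ) (i j : Fin d) : ℝ :=
  if i = j then ν {i} - ν ∅
  else ∑ S ∈ ((Finset.univ.erase i).erase j).powerset,
    W S.card d * (ν (insert i (insert j S)) - ν (insert j S) - ν (insert i S) + ν S)

/-- Shapley-Taylor dummy property: pairs involving a dummy player get zero credit. -/
theorem shapleyTaylor_dummy {d : ℕ} (ν : Finset (Fin d) → ℝ) (i j : Fin d)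
    (hdummy : (∀ S : Finset (Fin d), i ∉ S → ν (insert i S) = ν S) ∨
              (∀ S : Finset (Fin d), j ∉ S → ν (insert j S) = ν S)) :
    shapleyTaylor ν i j = 0 := by
  unfold shapleyTaylor
  by_cases hij : i = j
  · simp only [hij, if_pos rfl]
    rcases hdummy with h | h
    · have := h ∅ (by simp); simp at this; simp [← hij, this]
    · have := h ∅ (by simp); simp at this; simp [hij, this]
  · rw [if_neg hij]
    apply Finset.sum_eq_zero
    intro S hS
    rw [Finset.mem_powerset] at hS
    have hiS : i ∉ S := by
      intro h; have := hS h; rw [Finset.mem_erase, Finset.mem_erase] at this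
      exact this.2.1 rfl
    have hjS : j ∉ S := by
      intro h; have := hS h; rw [Finset.mem_erase] at this; exact this.1 rfl
    rcases hdummy with h | h
    · have h1 : ν (insert i (insert j S)) = ν (insert j S) :=
        h _ (by simp [hiS, hij])
      have h2 : ν (insert i S) = ν S := h _ hiS
      rw [h1, h2]; ring
    · have h1 : ν (insert i (insert j S)) = ν (insert i S) := by
        rw [Finset.insert_comm]
        exact h _ (by simp [hjS, Ne.symm hij])
      have h2 : ν (insert j S) = ν S := h _ hjS
      rw [h1, h2]; ring
end

section
/- If the group of features I⁻¹({i}) consists entirely of dummy players of a game ν on [d'], then i is a dummy player of the quotient game ν^I on [d] defined by ν^I(S) = ν(I⁻¹(S)). -/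
open Finset

/-- The preimage of a coalition of groups under the indexing function I. -/
def preim {d' d : ℕ} (I : Fin d' → Fin d) (S : Finset (Fin d)) : Finset (Fin d') :=
  Finset.univ.filter (fun j => I j ∈ S)

/-- If every feature in the group I⁻¹({i}) is a dummy of ν, then i is a dummy of
the quotient game ν^I(S) = ν(I⁻¹(S)). -/
theorem quotient_game_dummy {d' d : ℕ} (I : Fin d' → Fin d)
    (ν : Finset (Fin d') → ℝ) (i : Fin d)
    (hdummy : ∀ j : Fin d', I j = i →
      ∀ S : Finset (Fin d'), j ∉ S → ν (insert j S) = ν S) :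
    ∀ S : Finset (Fin d), i ∉ S →
      ν (preim I (insert i S)) = ν (preim I S) := by
  intro S hiS
  have key : ∀ T : Finset (Fin d'), (∀ j ∈ T, I j = i) →
      ν (preim I S ∪ T) = ν (preim I S) := by
    intro T
    induction T using Finset.induction_on with
    | empty => simp
    | @insert j T hj ih =>
      intro hT
      have hji : I j = i := hT j (by simp)
      have hjT : ∀ k ∈ T, I k = i := fun k hk => hT k (by simp [hk])
      have hjnot : j ∉ preim I S ∪ T := by
        simp only [Finset.mem_union, preim, Finset.mem_filter, Finset.mem_univ, true_and]
        rintro (h | h)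
        · exact hiS (hji ▸ h)
        · exact hj h
      rw [Finset.union_insert, hdummy j hji _ hjnot, ih hjT]
  have heq : preim I (insert i S) = preim I S ∪ Finset.univ.filter (fun j => I j = i) := by
    ext j
    simp [preim, Finset.mem_insert, or_comm]
  rw [heq]
  exact key _ (by simp)
end
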